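/- arXiv:2409.20495 — 2 statements merged into one kernel-verified Lean document; each statement's English description precedes it below -/
import Mathlib

section
/- Let G be a nontrivial finite abelian group, n ≥ 1, and let (σ,ρ) and (τ,π) be double partitions of n satisfying |σ| = |τ|, σ ⊴ τ and ρ ⊴ π. Then (σ,ρ) ≽_G (τ,π). -/
/-- The monoid hom `Perm (Fin n) →* MulAut (Fin n → G)`, permuting coordinates. -/
def permMulAut (G : Type*) [CommGroup G] (n : ℕ) :
    Equiv.Perm (Fin n) →* MulAut (Fin n → G) where
  toFun π := MulEquiv.arrowCongr π (MulEquiv.refl G)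
  map_one' := by ext f a; rfl
  map_mul' := by intro π σ; ext f a; rfl

/-- The wreath product `G ≀ Sₙ`. -/
abbrev Wr (G : Type*) [CommGroup G] (n : ℕ) :=
  SemidirectProduct (Fin n → G) (Equiv.Perm (Fin n)) (permMulAut G n)

/-- The natural action of `G ≀ Sₙ` on `G × [n]`. -/
def wAct {G : Type*} [CommGroup G] {n : ℕ} (w : Wr G n) (p : G × Fin n) : G × Fin n :=
  (p.1 * w.left (w.right p.2), w.right p.2)

/-- The `i`-th largest part of a multiset of naturals (0-indexed; `0` beyond the last part). -/
def dparts (s : Multiset ℕ) (i : ℕ) : ℕ := ((s.sort (· ≤ ·)).reverse).getD i 0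

/-- `s` is dominated by `t`. -/
def msDom (s t : Multiset ℕ) : Prop :=
  ∀ k, (((s.sort (· ≤ ·)).reverse).take k).sum ≤ (((t.sort (· ≤ ·)).reverse).take k).sum

/-- `T` is a `(σ,ρ)`-tabloid: the first component assigns to each element of `[n]` a block
(`Sum.inl i` is the block of the `i+1`-st largest part of `σ`, `Sum.inr j` that of `ρ`),
blocks have the prescribed sizes, and the colouring (second component)
is normalised to `1` on the `ρ`-blocks. -/
def IsTabloid (G : Type*) [CommGroup G] (n : ℕ) (σ ρ : Multiset ℕ)
    (T : (Fin n → ℕ ⊕ ℕ) × (Fin n → G)) : Prop :=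
  (∀ i, Nat.card {a : Fin n // T.1 a = Sum.inl i} = dparts σ i) ∧
  (∀ j, Nat.card {a : Fin n // T.1 a = Sum.inr j} = dparts ρ j) ∧
  (∀ a j, T.1 a = Sum.inr j → T.2 a = 1)

/-- The action of the wreath product on (raw) tabloids. -/
def tabAct {G : Type*} [CommGroup G] {n : ℕ} (w : Wr G n)
    (T : (Fin n → ℕ ⊕ ℕ) × (Fin n → G)) : (Fin n → ℕ ⊕ ℕ) × (Fin n → G) :=
  ⟨fun a => T.1 (w.right⁻¹ a),
   fun a => match T.1 (w.right⁻¹ a) with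
     | Sum.inl _ => T.2 (w.right⁻¹ a) * w.left a
     | Sum.inr _ => 1⟩

/-- A subset `Y` of `W` is transitive on `S ⊆ Ω` (w.r.t. an action `act`): there is a
constant `c > 0` such that any `a ∈ S` is mapped to any `b ∈ S` by exactly `c` elements of `Y`. -/
def IsTransitiveOn {W Ω : Type*} (act : W → Ω → Ω) (S : Set Ω) (Y : Set W) : Prop :=
  ∃ c : ℕ, 0 < c ∧ ∀ a ∈ S, ∀ b ∈ S, Nat.card {y : W // y ∈ Y ∧ act y a = b} = c

/-- `Y ⊆ G ≀ Sₙ` is `(σ,ρ)`-transitive. -/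
def DPTransitive (G : Type*) [CommGroup G] (n : ℕ) (σ ρ : Multiset ℕ)
    (Y : Set (Wr G n)) : Prop :=
  IsTransitiveOn tabAct {T | IsTabloid G n σ ρ T} Y

/-- `(σ,ρ) ≽_G (τ,π)` : every `(σ,ρ)`-transitive subset of `G ≀ Sₙ` is `(τ,π)`-transitive. -/
def DPDom (G : Type*) [CommGroup G] (n : ℕ) (σ ρ τ π : Multiset ℕ) : Prop :=
  ∀ Y : Set (Wr G n), DPTransitive G n σ ρ Y → DPTransitive G n τ π Y

/-- The partition obtained by adding `k` to the `r`-th largest part (1-indexed). -/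
def addPart (s : Multiset ℕ) (r k : ℕ) : Multiset ℕ :=
  s.erase (dparts s (r - 1)) + {dparts s (r - 1) + k}

/-!
Dominance of partitions is generated by moving single boxes from a row to a weakly longer row
(`dominance_induction`), so it suffices to show that such a move preserves transitivity.
Let `D` be a shape, `u`, `v` rows on the same side with `D v < D u`, let `D'` be `D` with one box
moved from row `u` to row `v`, and let `Y` be transitive on `D'`-tabloids with constant `c`.
For `D`-tabloids `B`, `C` let `F B C` be the number of `D'`-tabloids obtained from both `B` and `C`
by moving a cell from block `u` to block `v`, and let `N A C` be the number of `y ∈ Y` with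
`y • A = C`. Double counting shows that `C ↦ (D v + 1) N A C - c D u` lies in the kernel of `F`.
But `F` is the Gram matrix of the reverse moves `v → u` plus `(D u - D v)` times the identity,
hence nonsingular, so `N A C = c D u / (D v + 1)` for all `A`, `C`.
-/

open Finset Function

section MoveBox

variable {α : Type*} [DecidableEq α]

def moveBox (D : α → ℕ) (u v : α) : α → ℕ :=
  update (update D u (D u - 1)) v (D v + 1)

lemma moveBox_apply {D : α → ℕ} {u v : α} (huv : u ≠ v) (w : α) :
    moveBox D u v w = if w = v then D v + 1 else if w = u then D u - 1 else D w := by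
  by_cases hv : w = v
  · subst hv; simp [moveBox]
  · by_cases hu : w = u
    · subst hu; simp [moveBox, hv]
    · simp [moveBox, hu, hv]

lemma moveBox_moveBox {D : α → ℕ} {u v : α} (huv : u ≠ v) (hu : 0 < D u) :
    moveBox (moveBox D u v) v u = D := by
  funext w
  simp only [moveBox_apply huv.symm, moveBox_apply huv]
  split_ifs <;> subst_vars <;> omega

lemma moveBox_sumElim_inl {β : Type*} [DecidableEq β] (d : α → ℕ) (e : β → ℕ) (i j : α) :
    moveBox (Sum.elim d e) (.inl i) (.inl j) = Sum.elim (moveBox d i j) e := by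
  simp only [moveBox, Sum.elim_inl, Sum.update_elim_inl]

lemma moveBox_sumElim_inr {β : Type*} [DecidableEq β] (d : β → ℕ) (e : α → ℕ) (i j : α) :
    moveBox (Sum.elim d e) (.inr i) (.inr j) = Sum.elim d (moveBox e i j) := by
  simp only [moveBox, Sum.elim_inr, Sum.update_elim_inr]

end MoveBox

lemma sum_range_moveBox {d : ℕ → ℕ} {i j : ℕ} (hij : i < j) (hj : 0 < d j) (k : ℕ) :
    ∑ t ∈ range k, moveBox d j i t + (if j < k then 1 else 0) =
      ∑ t ∈ range k, d t + (if i < k then 1 else 0) := by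
  induction k with
  | zero => simp
  | succ k ih =>
    rw [sum_range_succ, sum_range_succ, moveBox_apply hij.ne']
    split_ifs at ih ⊢ <;> subst_vars <;> omega

lemma antitone_moveBox {d : ℕ → ℕ} (hd : Antitone d) {i j : ℕ} (hij : i < j)
    (hi : ∀ k < i, d i < d k) (hj : d (j + 1) < d j) (hj0 : 0 < d j) :
    Antitone (moveBox d j i) := by
  refine antitone_nat_of_succ_le fun k => ?_
  have hk : d (k + 1) ≤ d k := hd k.le_succ
  rw [moveBox_apply hij.ne', moveBox_apply hij.ne']
  by_cases hki : k + 1 = i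
  · have := hi k (by omega)
    split_ifs <;> omega
  by_cases hkj : k = j
  · subst hkj
    split_ifs <;> omega
  have : d j ≤ d i := hd hij.le
  split_ifs <;> subst_vars <;> omega

lemma exists_dominance_gap {N : ℕ} {d d' : ℕ → ℕ} (hd : Antitone d) (hd' : Antitone d')
    (hdN : ∀ k, N ≤ k → d k = 0) (hd'N : ∀ k, N ≤ k → d' k = 0)
    (hdom : ∀ k, ∑ t ∈ range k, d t ≤ ∑ t ∈ range k, d' t)
    (htot : ∑ t ∈ range N, d t = ∑ t ∈ range N, d' t) (hne : d ≠ d') :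
    ∃ i j, i < j ∧ j < N ∧ 0 < d j ∧ (∀ k < i, d i < d k) ∧ d (j + 1) < d j ∧
      ∀ k, i < k → k ≤ j → ∑ t ∈ range k, d t < ∑ t ∈ range k, d' t := by
  have hex : ∃ k, d k ≠ d' k := by
    by_contra! h
    exact hne (funext h)
  obtain ⟨i, hine, hbelow⟩ : ∃ i, d i ≠ d' i ∧ ∀ k < i, d k = d' k :=
    ⟨Nat.find hex, Nat.find_spec hex, fun k hk => not_not.1 (Nat.find_min hex hk)⟩
  have hpre : ∑ t ∈ range i, d t = ∑ t ∈ range i, d' t :=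
    sum_congr rfl fun t ht => hbelow t (mem_range.1 ht)
  have hdi : d i < d' i := by
    have := hdom (i + 1)
    rw [sum_range_succ, sum_range_succ, hpre] at this
    omega
  have hiN : i < N := by
    by_contra! h
    exact hine (by rw [hdN i h, hd'N i h])
  -- `j` is where the partial sums of `d` first catch up with those of `d'` again
  have hexj : ∃ k, i < k ∧ ∑ t ∈ range (k + 1), d t = ∑ t ∈ range (k + 1), d' t :=
    ⟨N, hiN, by rw [sum_range_succ, sum_range_succ, hdN N le_rfl, hd'N N le_rfl, htot]⟩
  obtain ⟨j, ⟨hij, hjeq⟩, hjmin⟩ : ∃ j,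
      (i < j ∧ ∑ t ∈ range (j + 1), d t = ∑ t ∈ range (j + 1), d' t) ∧
      ∀ k < j, ¬(i < k ∧ ∑ t ∈ range (k + 1), d t = ∑ t ∈ range (k + 1), d' t) :=
    ⟨Nat.find hexj, Nat.find_spec hexj, fun k hk => Nat.find_min hexj hk⟩
  have hgap : ∀ k, i < k → k ≤ j → ∑ t ∈ range k, d t < ∑ t ∈ range k, d' t := by
    intro k hik hkj
    obtain ⟨m, rfl⟩ : ∃ m, k = m + 1 := ⟨k - 1, by omega⟩
    rcases (Nat.le_of_lt_succ hik).eq_or_lt with rfl | him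
    · rw [sum_range_succ, sum_range_succ, hpre]
      omega
    · exact (hdom _).lt_of_ne fun h => hjmin m (by omega) ⟨him, h⟩
  have hdj : d' j < d j := by
    have := hgap j hij le_rfl
    rw [sum_range_succ, sum_range_succ] at hjeq
    omega
  have hjN : j < N := by
    by_contra! h
    rw [hdN j h] at hdj
    omega
  refine ⟨i, j, hij, hjN, by omega, fun k hk => ?_, ?_, hgap⟩
  · have := hd' hk.le
    rw [← hbelow k hk] at this
    omega
  · have hsucc : d (j + 1) ≤ d j := hd j.le_succ
    have hsucc' : d' (j + 1) ≤ d' j := hd' j.le_succ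
    have := hdom (j + 2)
    rw [sum_range_succ, sum_range_succ d', hjeq] at this
    omega

theorem dominance_induction {P : (ℕ → ℕ) → Prop}
    (hmove : ∀ d i j, Antitone d → i < j → 0 < d j → P d → P (moveBox d j i))
    {N : ℕ} {d d' : ℕ → ℕ} (hd : Antitone d) (hd' : Antitone d')
    (hdN : ∀ k, N ≤ k → d k = 0) (hd'N : ∀ k, N ≤ k → d' k = 0)
    (hdom : ∀ k, ∑ t ∈ range k, d t ≤ ∑ t ∈ range k, d' t)
    (htot : ∑ t ∈ range N, d t = ∑ t ∈ range N, d' t) (hP : P d) : P d' := by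
  obtain ⟨m, hm⟩ : ∃ m,
      ∑ k ∈ range N, (∑ t ∈ range k, d' t - ∑ t ∈ range k, d t) = m := ⟨_, rfl⟩
  induction m using Nat.strong_induction_on generalizing d with
  | _ m ih =>
  by_cases hne : d = d'
  · exact hne ▸ hP
  obtain ⟨i, j, hij, hjN, hj0, hi, hj, hgap⟩ :=
    exists_dominance_gap hd hd' hdN hd'N hdom htot hne
  have hsum := sum_range_moveBox hij hj0
  refine ih _ ?_ (antitone_moveBox hd hij hi hj hj0) (fun k hk => ?_) (fun k => ?_) ?_
    (hmove d i j hd hij hj0 hP) rfl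
  · rw [← hm]
    refine sum_lt_sum (fun k _ => ?_) ⟨j, mem_range.2 hjN, ?_⟩
    · have := hsum k
      split_ifs at this <;> omega
    · have := hsum j
      rw [if_neg (lt_irrefl j), if_pos hij] at this
      have := hgap j hij le_rfl
      omega
  · rw [moveBox_apply hij.ne', if_neg (by omega), if_neg (by omega), hdN k hk]
  · have := hsum k
    have := hdom k
    by_cases hk : i < k ∧ k ≤ j
    · have := hgap k hk.1 hk.2
      split_ifs at * <;> omega
    · split_ifs at * <;> omega
  · have := hsum N
    rw [if_pos hjN, if_pos (hij.trans hjN)] at this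
    omega

lemma sum_range_getD (l : List ℕ) (k : ℕ) :
    ∑ t ∈ range k, l.getD t 0 = (l.take k).sum := by
  induction k with
  | zero => simp
  | succ k ih =>
    rw [sum_range_succ, ih, List.take_add_one, List.sum_append, List.getD_eq_getElem?_getD]
    cases l[k]? <;> simp

lemma sum_range_dparts (s : Multiset ℕ) (k : ℕ) :
    ∑ t ∈ range k, dparts s t = (((s.sort (· ≤ ·)).reverse).take k).sum :=
  sum_range_getD _ k

lemma dparts_eq_zero {s : Multiset ℕ} {k : ℕ} (hk : Multiset.card s ≤ k) : dparts s k = 0 :=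
  List.getD_eq_default _ _ (by simpa using hk)

lemma sum_range_dparts_of_card_le {s : Multiset ℕ} {k : ℕ} (hk : Multiset.card s ≤ k) :
    ∑ t ∈ range k, dparts s t = s.sum := by
  rw [sum_range_dparts, List.take_of_length_le (by simpa using hk), List.sum_reverse,
    ← Multiset.sum_coe, Multiset.sort_eq]

lemma antitone_dparts (s : Multiset ℕ) : Antitone (dparts s) := by
  intro a b hab
  have hsorted : ((s.sort (· ≤ ·)).reverse).Pairwise (· ≥ ·) :=
    List.pairwise_reverse.2 (Multiset.pairwise_sort s (· ≤ ·))
  rcases lt_or_ge b (Multiset.card s) with hb | hb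
  · rcases hab.eq_or_lt with rfl | hlt
    · exact le_rfl
    have hb' : b < ((s.sort (· ≤ ·)).reverse).length := by simpa using hb
    rw [dparts, dparts, List.getD_eq_getElem _ _ (hlt.trans hb'), List.getD_eq_getElem _ _ hb']
    exact hsorted.rel_get_of_lt (a := ⟨a, hlt.trans hb'⟩) (b := ⟨b, hb'⟩) hlt
  · rw [dparts_eq_zero hb]
    exact Nat.zero_le _

theorem msDom_induction {P : (ℕ → ℕ) → Prop}
    (hmove : ∀ d i j, Antitone d → i < j → 0 < d j → P d → P (moveBox d j i))
    {s t : Multiset ℕ} (hst : msDom s t) (hsum : s.sum = t.sum) (hP : P (dparts s)) :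
    P (dparts t) :=
  dominance_induction hmove (N := Multiset.card s + Multiset.card t)
    (antitone_dparts s) (antitone_dparts t)
    (fun _ hk => dparts_eq_zero (by omega)) (fun _ hk => dparts_eq_zero (by omega))
    (fun k => by simpa only [sum_range_dparts] using hst k)
    (by rw [sum_range_dparts_of_card_le (by omega), sum_range_dparts_of_card_le (by omega), hsum])
    hP

section Gram

variable {ι α R : Type*} [DecidableEq α] [CommRing R] [LinearOrder R] [IsStrictOrderedRing R]

lemma sum_sum_card_inter_mul_nonneg (s : Finset ι) (f : ι → Finset α) (w : ι → R) :
    0 ≤ ∑ i ∈ s, ∑ j ∈ s, (#(f i ∩ f j) : R) * (w i * w j) := by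
  set U := s.biUnion f
  have hcard : ∀ i ∈ s, ∀ j ∈ s, (#(f i ∩ f j) : R) =
      ∑ a ∈ U, (if a ∈ f i then 1 else 0) * (if a ∈ f j then 1 else 0) := by
    intro i hi j _
    simp_rw [ite_zero_mul_ite_zero, one_mul, sum_boole, ← filter_mem_eq_inter]
    congr 2
    ext a
    simp only [mem_filter]
    exact ⟨fun h => ⟨subset_biUnion_of_mem f hi h.1, h⟩, And.right⟩
  calc (0 : R) ≤ ∑ a ∈ U, (∑ i ∈ s, (if a ∈ f i then 1 else 0) * w i) ^ 2 :=
        sum_nonneg fun a _ => sq_nonneg _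
    _ = _ := by
      simp_rw [sq, sum_mul_sum]
      rw [sum_comm]
      refine sum_congr rfl fun i hi => ?_
      rw [sum_comm]
      refine sum_congr rfl fun j hj => ?_
      rw [hcard i hi j hj, sum_mul]
      exact sum_congr rfl fun a _ => by ring

lemma eq_zero_of_sum_card_inter_add_mul_eq_zero [DecidableEq ι] {s : Finset ι}
    (f : ι → Finset α) {d : R} (hd : 0 < d) {w : ι → R}
    (hw : ∀ i ∈ s, ∑ j ∈ s, ((#(f i ∩ f j) : R) + if i = j then d else 0) * w j = 0) :
    ∀ i ∈ s, w i = 0 := by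
  have hquad : ∑ i ∈ s, ∑ j ∈ s, (#(f i ∩ f j) : R) * (w i * w j) +
      d * ∑ i ∈ s, w i * w i = 0 := by
    rw [mul_sum, ← sum_add_distrib]
    refine sum_eq_zero fun i hi => ?_
    have := congrArg (w i * ·) (hw i hi)
    simp only [mul_zero, mul_sum, add_mul, mul_add, sum_add_distrib, ite_mul, zero_mul,
      sum_ite_eq, if_pos hi] at this
    rw [← this]
    congr 1
    · exact sum_congr rfl fun j _ => by ring
    · ring
  have hsq : ∑ i ∈ s, w i * w i = 0 := by
    have := sum_sum_card_inter_mul_nonneg s f w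
    have := sum_nonneg fun i (_ : i ∈ s) => mul_self_nonneg (w i)
    nlinarith
  exact fun i hi => mul_self_eq_zero.1
    ((sum_eq_zero_iff_of_nonneg fun _ _ => mul_self_nonneg _).1 hsq i hi)

end Gram

open scoped Classical

section Tabloids

variable {G : Type} {n : ℕ} {u v : ℕ ⊕ ℕ}

abbrev RawTabloid (G : Type) (n : ℕ) := (Fin n → ℕ ⊕ ℕ) × (Fin n → G)

def blockSize (f : Fin n → ℕ ⊕ ℕ) (w : ℕ ⊕ ℕ) : ℕ := #{a | f a = w}

def IsNormalized [One G] (T : RawTabloid G n) : Prop := ∀ a j, T.1 a = Sum.inr j → T.2 a = 1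

def tabloids (G : Type) [One G] (n : ℕ) (D : ℕ ⊕ ℕ → ℕ) : Set (RawTabloid G n) :=
  {T | blockSize T.1 = D ∧ IsNormalized T}

lemma blockSize_comp_perm (f : Fin n → ℕ ⊕ ℕ) (π : Equiv.Perm (Fin n)) :
    blockSize (f ∘ π) = blockSize f := by
  funext w
  exact card_equiv π (by simp)

lemma blockSize_update {f : Fin n → ℕ ⊕ ℕ} {x : Fin n} (hx : f x = u) (huv : u ≠ v) :
    blockSize (update f x v) = moveBox (blockSize f) u v := by
  have hsplit : ∀ g : Fin n → ℕ ⊕ ℕ, ∀ w, blockSize g w =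
      (if g x = w then 1 else 0) + ∑ a ∈ univ.erase x, if g a = w then 1 else 0 := fun g w => by
    rw [blockSize, card_filter]
    exact (add_sum_erase _ _ (mem_univ x)).symm
  have hrest : ∀ w, ∑ a ∈ univ.erase x, (if update f x v a = w then 1 else 0) =
      ∑ a ∈ univ.erase x, if f a = w then 1 else 0 := fun w =>
    sum_congr rfl fun a ha => by rw [update_of_ne (ne_of_mem_erase ha)]
  funext w
  simp only [moveBox_apply huv, hsplit, hrest, update_self, hx]
  split_ifs <;> subst_vars <;> simp_all
  omega

lemma tabloids_finite [One G] [Finite G] (D : ℕ ⊕ ℕ → ℕ) : (tabloids G n D).Finite := by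
  rcases (tabloids G n D).eq_empty_or_nonempty with h | ⟨T₀, hT₀⟩
  · exact h ▸ Set.finite_empty
  -- every block label occurring in a `D`-tabloid already occurs in `T₀`
  refine ((Set.Finite.pi fun _ => Set.finite_range T₀.1).prod Set.finite_univ).subset ?_
  rintro T hT
  refine ⟨fun a _ => ?_, Set.mem_univ _⟩
  have hpos : 0 < blockSize T₀.1 (T.1 a) := by
    rw [hT₀.1, ← hT.1]
    exact card_pos.2 ⟨a, by simp⟩
  obtain ⟨b, hb⟩ := card_pos.1 hpos
  exact ⟨b, (mem_filter.1 hb).2⟩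

noncomputable def moveCell (u v : ℕ ⊕ ℕ) (A : RawTabloid G n) : Finset (RawTabloid G n) :=
  ({x | A.1 x = u} : Finset (Fin n)).image fun x => (update A.1 x v, A.2)

lemma mem_moveCell {A T : RawTabloid G n} :
    T ∈ moveCell u v A ↔ ∃ x, A.1 x = u ∧ (update A.1 x v, A.2) = T := by
  simp [moveCell]

lemma card_moveCell (huv : u ≠ v) (A : RawTabloid G n) :
    #(moveCell u v A) = blockSize A.1 u := by
  refine card_image_of_injOn fun x hx x' _ h => ?_
  by_contra hne
  have := congrFun (congrArg Prod.fst h) x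
  simp only [update_self, update_of_ne hne] at this
  exact huv ((mem_filter.1 hx).2.symm.trans this.symm)

lemma mem_moveCell_comm {A T : RawTabloid G n} (h : T ∈ moveCell u v A) :
    A ∈ moveCell v u T := by
  obtain ⟨x, hx, rfl⟩ := mem_moveCell.1 h
  exact mem_moveCell.2 ⟨x, update_self .., by rw [update_idem, ← hx, update_eq_self]⟩

lemma isNormalized_of_mem_moveCell [One G] (hside : u.isLeft = v.isLeft) {A T : RawTabloid G n}
    (hA : IsNormalized A) (h : T ∈ moveCell u v A) : IsNormalized T := by
  obtain ⟨x, hx, rfl⟩ := mem_moveCell.1 h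
  intro a j ha
  by_cases hax : a = x
  · subst hax
    simp only [update_self] at ha
    subst ha
    cases u with
    | inl i => simp at hside
    | inr i => exact hA a i hx
  · exact hA a j (by simpa [update_of_ne hax] using ha)

lemma mem_tabloids_of_mem_moveCell [One G] (huv : u ≠ v) (hside : u.isLeft = v.isLeft)
    {D : ℕ ⊕ ℕ → ℕ} {A T : RawTabloid G n} (hA : A ∈ tabloids G n D) (h : T ∈ moveCell u v A) :
    T ∈ tabloids G n (moveBox D u v) := by
  refine ⟨?_, isNormalized_of_mem_moveCell hside hA.2 h⟩
  obtain ⟨x, hx, rfl⟩ := mem_moveCell.1 h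
  rw [blockSize_update hx huv, hA.1]

lemma exists_swap_of_mem_inter_moveCell {A B S : RawTabloid G n} (hAB : A ≠ B)
    (hS : S ∈ moveCell u v A ∩ moveCell u v B) :
    ∃ x y, x ≠ y ∧ A.1 x = u ∧ B.1 x = v ∧ A.1 y = v ∧ B.1 y = u ∧
      (∀ z, z ≠ x → z ≠ y → A.1 z = B.1 z) ∧ A.2 = B.2 ∧ S = (update A.1 x v, A.2) := by
  obtain ⟨hSA, hSB⟩ := mem_inter.1 hS
  obtain ⟨x, hx, rfl⟩ := mem_moveCell.1 hSA
  obtain ⟨y, hy, hxy⟩ := mem_moveCell.1 hSB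
  obtain ⟨h1, h2⟩ := Prod.ext_iff.1 hxy
  have hagree : ∀ z, z ≠ x → z ≠ y → A.1 z = B.1 z := fun z hzx hzy => by
    simpa [update_of_ne hzx, update_of_ne hzy] using (congrFun h1 z).symm
  have hne : x ≠ y := by
    rintro rfl
    refine hAB (Prod.ext (funext fun z => ?_) h2.symm)
    by_cases hz : z = x
    · rw [hz, hx, hy]
    · exact hagree z hz hz
  refine ⟨x, y, hne, hx, ?_, ?_, hy, hagree, h2.symm, rfl⟩
  · simpa [update_of_ne hne] using congrFun h1 x
  · simpa [update_of_ne hne.symm] using (congrFun h1 y).symm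

lemma card_inter_moveCell_le_one (huv : u ≠ v) {A B : RawTabloid G n} (hAB : A ≠ B) :
    #(moveCell u v A ∩ moveCell u v B) ≤ 1 := by
  refine card_le_one.2 fun S hS S' hS' => ?_
  obtain ⟨x, -, -, hAx, hBx, -, -, -, -, rfl⟩ := exists_swap_of_mem_inter_moveCell hAB hS
  obtain ⟨x', y', -, -, -, hAy', -, hagree', -, rfl⟩ := exists_swap_of_mem_inter_moveCell hAB hS'
  obtain rfl : x = x' := by
    by_contra hne
    have hxy : x ≠ y' := by
      rintro rfl
      exact huv (hAx.symm.trans hAy')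
    exact huv (hAx.symm.trans ((hagree' x hne hxy).trans hBx))
  rfl

lemma inter_moveCell_swap_nonempty {A B : RawTabloid G n} (hAB : A ≠ B)
    (h : (moveCell u v A ∩ moveCell u v B).Nonempty) :
    (moveCell v u A ∩ moveCell v u B).Nonempty := by
  obtain ⟨S, hS⟩ := h
  obtain ⟨x, y, hxy, hAx, hBx, hAy, hBy, hagree, h2, -⟩ :=
    exists_swap_of_mem_inter_moveCell hAB hS
  refine ⟨(update A.1 y u, A.2), mem_inter.2 ⟨mem_moveCell.2 ⟨y, hAy, rfl⟩,
    mem_moveCell.2 ⟨x, hBx, Prod.ext (funext fun z => ?_) h2.symm⟩⟩⟩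
  by_cases hzx : z = x
  · simp [hzx, hxy, hAx]
  by_cases hzy : z = y
  · simp [hzy, hxy.symm, hBy]
  simp [hzx, hzy, hagree z hzx hzy]

lemma card_inter_moveCell_swap (huv : u ≠ v) {A B : RawTabloid G n} (hAB : A ≠ B) :
    #(moveCell u v A ∩ moveCell u v B) = #(moveCell v u A ∩ moveCell v u B) := by
  have h1 := card_inter_moveCell_le_one huv hAB
  have h2 := card_inter_moveCell_le_one huv.symm hAB
  have h3 := inter_moveCell_swap_nonempty (u := u) (v := v) hAB
  have h4 := inter_moveCell_swap_nonempty (u := v) (v := u) hAB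
  simp only [← card_pos] at h3 h4
  omega

lemma card_inter_moveCell_eq [One G] {D : ℕ ⊕ ℕ → ℕ} {B C : RawTabloid G n} (huv : u ≠ v)
    (hB : B ∈ tabloids G n D) (hC : C ∈ tabloids G n D) :
    (#(moveCell u v B ∩ moveCell u v C) : ℤ) =
      #(moveCell v u B ∩ moveCell v u C) + if B = C then (D u - D v : ℤ) else 0 := by
  split_ifs with hBC
  · subst hBC
    simp only [inter_self, card_moveCell huv, card_moveCell huv.symm, hB.1]
    ring
  · rw [card_inter_moveCell_swap huv hBC, add_zero]

section Action

variable [CommGroup G]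

lemma setOf_isTabloid (σ ρ : Multiset ℕ) :
    {T | IsTabloid G n σ ρ T} = tabloids G n (Sum.elim (dparts σ) (dparts ρ)) := by
  have hcard : ∀ (f : Fin n → ℕ ⊕ ℕ) w, Nat.card {a // f a = w} = blockSize f w := by
    intro f w
    rw [Nat.card_eq_fintype_card, Fintype.card_subtype, blockSize]
  ext T
  simp only [Set.mem_ofPred_eq, IsTabloid, tabloids, hcard, funext_iff, Sum.forall, Sum.elim_inl,
    Sum.elim_inr, IsNormalized, and_assoc]

lemma tabAct_mul (g h : Wr G n) (T : RawTabloid G n) :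
    tabAct (g * h) T = tabAct g (tabAct h T) := by
  have hinv : ∀ a, (g * h).right⁻¹ a = h.right⁻¹ (g.right⁻¹ a) := fun a => rfl
  refine Prod.ext (funext fun a => ?_) (funext fun a => ?_)
  · simp only [tabAct, hinv]
  · simp only [tabAct, hinv]
    split
    · show _ = T.2 _ * h.left _ * g.left a
      rw [mul_assoc, mul_comm (h.left _)]
      rfl
    · rfl

lemma tabAct_one {T : RawTabloid G n} (hT : IsNormalized T) :
    tabAct (1 : Wr G n) T = T := by
  refine Prod.ext rfl (funext fun a => ?_)
  show (match T.1 a with | Sum.inl _ => T.2 a * 1 | Sum.inr _ => 1) = T.2 a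
  split
  · exact mul_one _
  · exact (hT a _ ‹_›).symm

lemma isNormalized_tabAct (y : Wr G n) (T : RawTabloid G n) :
    IsNormalized (tabAct y T) := by
  intro a j h
  have h' : T.1 (y.right⁻¹ a) = Sum.inr j := h
  simp only [tabAct, h']

lemma inv_tabAct_tabAct (y : Wr G n) {T : RawTabloid G n} (hT : IsNormalized T) :
    tabAct y⁻¹ (tabAct y T) = T := by
  rw [← tabAct_mul, inv_mul_cancel, tabAct_one hT]

lemma tabAct_inv_tabAct (y : Wr G n) {T : RawTabloid G n} (hT : IsNormalized T) :
    tabAct y (tabAct y⁻¹ T) = T := by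
  rw [← tabAct_mul, mul_inv_cancel, tabAct_one hT]

lemma tabAct_mem_tabloids {D : ℕ ⊕ ℕ → ℕ} {T : RawTabloid G n}
    (hT : T ∈ tabloids G n D) (y : Wr G n) : tabAct y T ∈ tabloids G n D :=
  ⟨(blockSize_comp_perm T.1 y.right⁻¹).trans hT.1, isNormalized_tabAct y T⟩

lemma tabAct_mem_moveCell (hside : u.isLeft = v.isLeft) (y : Wr G n)
    {A T : RawTabloid G n} (h : T ∈ moveCell u v A) : tabAct y T ∈ moveCell u v (tabAct y A) := by
  obtain ⟨x, hx, rfl⟩ := mem_moveCell.1 h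
  refine mem_moveCell.2 ⟨y.right x, by simp [tabAct, hx], ?_⟩
  have hcomp : update A.1 x v ∘ ⇑y.right⁻¹ = update (A.1 ∘ ⇑y.right⁻¹) (y.right x) v := by
    rw [update_comp_equiv]; simp [Equiv.Perm.inv_def]
  refine Prod.ext hcomp.symm (funext fun a => ?_)
  by_cases hax : y.right⁻¹ a = x
  · have hv : update A.1 x v (y.right⁻¹ a) = v := by rw [hax, update_self]
    have hu : A.1 (y.right⁻¹ a) = u := by rw [hax, hx]
    simp only [tabAct, hv, hu]
    cases u <;> cases v <;> simp_all
  · simp only [tabAct, update_of_ne hax]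

lemma card_filter_tabAct_mem_moveCell {A B : RawTabloid G n} (hside : u.isLeft = v.isLeft)
    (y : Wr G n) (hA : IsNormalized A) :
    #{T ∈ moveCell u v A | tabAct y T ∈ moveCell u v B} =
      #(moveCell u v (tabAct y A) ∩ moveCell u v B) := by
  have hnorm : ∀ {A T : RawTabloid G n}, IsNormalized A → T ∈ moveCell u v A → IsNormalized T :=
    isNormalized_of_mem_moveCell hside
  refine card_nbij' (tabAct y) (tabAct y⁻¹) (fun T hT => ?_) (fun S hS => ?_)
    (fun T hT => ?_) (fun S hS => ?_)
  · obtain ⟨hT, hyT⟩ := mem_filter.1 hT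
    exact mem_inter.2 ⟨tabAct_mem_moveCell hside y hT, hyT⟩
  · obtain ⟨hS, hSB⟩ := mem_inter.1 hS
    have hS' := tabAct_mem_moveCell hside y⁻¹ hS
    rw [inv_tabAct_tabAct y hA] at hS'
    rw [mem_coe, mem_filter, tabAct_inv_tabAct y (hnorm (isNormalized_tabAct y A) hS)]
    exact ⟨hS', hSB⟩
  · exact inv_tabAct_tabAct y (hnorm hA (mem_filter.1 hT).1)
  · exact tabAct_inv_tabAct y (hnorm (isNormalized_tabAct y A) (mem_inter.1 hS).1)

end Action

end Tabloids

instance SemidirectProduct.instFintype {N H : Type*} [Group N] [Group H] [Fintype N] [Fintype H]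
    {φ : H →* MulAut N} : Fintype (N ⋊[φ] H) :=
  Fintype.ofEquiv _ SemidirectProduct.equivProd.symm

section Transitivity

variable {G : Type} [CommGroup G] [Fintype G] {n : ℕ} {Y : Set (Wr G n)}

noncomputable def numTransporters (Y : Set (Wr G n)) (A B : RawTabloid G n) : ℕ :=
  #{y ∈ Y.toFinset | tabAct y A = B}

lemma isTransitiveOn_tabAct_iff {S : Set (RawTabloid G n)} :
    IsTransitiveOn tabAct S Y ↔ ∃ c, 0 < c ∧ ∀ A ∈ S, ∀ B ∈ S, numTransporters Y A B = c := by
  have hcard : ∀ A B, Nat.card {y // y ∈ Y ∧ tabAct y A = B} = numTransporters Y A B := by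
    intro A B
    rw [Nat.card_eq_fintype_card, Fintype.card_subtype, numTransporters]
    congr 1
    ext
    simp
  simp only [IsTransitiveOn, hcard]

noncomputable def tabloidFinset (G : Type) [One G] [Finite G] (n : ℕ) (D : ℕ ⊕ ℕ → ℕ) :
    Finset (RawTabloid G n) :=
  (tabloids_finite D).toFinset

lemma mem_tabloidFinset {D : ℕ ⊕ ℕ → ℕ} {T : RawTabloid G n} :
    T ∈ tabloidFinset G n D ↔ T ∈ tabloids G n D :=
  Set.Finite.mem_toFinset _

variable {D : ℕ ⊕ ℕ → ℕ} {u v : ℕ ⊕ ℕ} {A B : RawTabloid G n} {c : ℕ}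

lemma sum_numTransporters_mul_card_inter (huv : u ≠ v) (hside : u.isLeft = v.isLeft)
    (hY : ∀ T ∈ tabloids G n (moveBox D u v), ∀ T' ∈ tabloids G n (moveBox D u v),
      numTransporters Y T T' = c)
    (hA : A ∈ tabloids G n D) (hB : B ∈ tabloids G n D) :
    ∑ C ∈ tabloidFinset G n D, numTransporters Y A C * #(moveCell u v C ∩ moveCell u v B) =
      c * (D u * D u) := by
  have hmv : ∀ {T}, T ∈ tabloids G n D → #(moveCell u v T) = D u := fun hT => by
    rw [card_moveCell huv, hT.1]
  calc ∑ C ∈ tabloidFinset G n D, numTransporters Y A C * #(moveCell u v C ∩ moveCell u v B)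
      = ∑ y ∈ Y.toFinset, #(moveCell u v (tabAct y A) ∩ moveCell u v B) := by
        rw [← sum_fiberwise_of_maps_to' (g := fun y => tabAct y A) (t := tabloidFinset G n D)
          (fun y _ => mem_tabloidFinset.2 (tabAct_mem_tabloids hA y))
          (fun C => #(moveCell u v C ∩ moveCell u v B))]
        simp only [sum_const, smul_eq_mul, numTransporters]
    _ = ∑ y ∈ Y.toFinset, #{T ∈ moveCell u v A | tabAct y T ∈ moveCell u v B} := by
        simp only [card_filter_tabAct_mem_moveCell hside _ hA.2]
    _ = ∑ T ∈ moveCell u v A, #{y ∈ Y.toFinset | tabAct y T ∈ moveCell u v B} :=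
        (sum_card_bipartiteAbove_eq_sum_card_bipartiteBelow _).symm
    _ = ∑ T ∈ moveCell u v A, ∑ T' ∈ moveCell u v B, numTransporters Y T T' :=
        sum_congr rfl fun T _ => by
          rw [card_eq_sum_card_fiberwise (f := fun y => tabAct y T)
            (s := {y ∈ Y.toFinset | tabAct y T ∈ moveCell u v B}) (t := moveCell u v B)
            fun y hy => (mem_filter.1 hy).2]
          refine sum_congr rfl fun T' hT' => ?_
          rw [filter_filter, numTransporters]
          exact congrArg card (filter_congr fun y _ => ⟨And.right, fun h => ⟨h ▸ hT', h⟩⟩)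
    _ = c * (D u * D u) := by
        rw [sum_congr rfl fun T hT => sum_congr rfl fun T' hT' =>
          hY T (mem_tabloids_of_mem_moveCell huv hside hA hT) T'
            (mem_tabloids_of_mem_moveCell huv hside hB hT')]
        simp only [sum_const, smul_eq_mul, hmv hA, hmv hB]
        ring

lemma sum_card_inter_moveCell (huv : u ≠ v) (hside : u.isLeft = v.isLeft) (hu : 0 < D u)
    (hB : B ∈ tabloids G n D) :
    ∑ C ∈ tabloidFinset G n D, #(moveCell u v C ∩ moveCell u v B) = D u * (D v + 1) := by
  have hback : ∀ S ∈ moveCell u v B,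
      {C ∈ tabloidFinset G n D | S ∈ moveCell u v C} = moveCell v u S := fun S hS => by
    have hS := mem_tabloids_of_mem_moveCell huv hside hB hS
    ext C
    rw [mem_filter, mem_tabloidFinset]
    refine ⟨fun h => mem_moveCell_comm h.2, fun h => ⟨?_, mem_moveCell_comm h⟩⟩
    simpa [moveBox_moveBox huv hu] using
      mem_tabloids_of_mem_moveCell huv.symm hside.symm hS h
  calc ∑ C ∈ tabloidFinset G n D, #(moveCell u v C ∩ moveCell u v B)
      = ∑ C ∈ tabloidFinset G n D, #{S ∈ moveCell u v B | S ∈ moveCell u v C} :=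
        sum_congr rfl fun C _ => by rw [filter_mem_eq_inter, inter_comm]
    _ = ∑ S ∈ moveCell u v B, #{C ∈ tabloidFinset G n D | S ∈ moveCell u v C} :=
        sum_card_bipartiteAbove_eq_sum_card_bipartiteBelow _
    _ = ∑ S ∈ moveCell u v B, (D v + 1) := sum_congr rfl fun S hS => by
        rw [hback S hS, card_moveCell huv.symm,
          (mem_tabloids_of_mem_moveCell huv hside hB hS).1, moveBox_apply huv, if_pos rfl]
    _ = D u * (D v + 1) := by rw [sum_const, smul_eq_mul, card_moveCell huv, hB.1]

theorem isTransitiveOn_tabloids_of_moveBox (huv : u ≠ v) (hside : u.isLeft = v.isLeft)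
    (hvu : D v < D u) (hY : IsTransitiveOn tabAct (tabloids G n (moveBox D u v)) Y) :
    IsTransitiveOn tabAct (tabloids G n D) Y := by
  obtain ⟨c, hc, hY⟩ := isTransitiveOn_tabAct_iff.1 hY
  have hconst : ∀ A ∈ tabloids G n D, ∀ B ∈ tabloids G n D,
      (D v + 1) * numTransporters Y A B = c * D u := by
    intro A hA
    suffices h : ∀ B ∈ tabloidFinset G n D,
        ((D v + 1) * numTransporters Y A B - c * D u : ℤ) = 0 from
      fun B hB => by exact_mod_cast sub_eq_zero.1 (h B (mem_tabloidFinset.2 hB))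
    refine eq_zero_of_sum_card_inter_add_mul_eq_zero (moveCell v u)
      (d := (D u - D v : ℤ)) (by omega) fun B hB => ?_
    have hB := mem_tabloidFinset.1 hB
    have hE := sum_numTransporters_mul_card_inter huv hside hY hA hB
    have hR := sum_card_inter_moveCell huv hside (by omega) hB
    calc ∑ C ∈ tabloidFinset G n D, ((#(moveCell v u B ∩ moveCell v u C) : ℤ) +
          if B = C then (D u - D v : ℤ) else 0) *
          ((D v + 1) * numTransporters Y A C - c * D u)
        = ∑ C ∈ tabloidFinset G n D, (#(moveCell u v C ∩ moveCell u v B) : ℤ) *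
            ((D v + 1) * numTransporters Y A C - c * D u) :=
          sum_congr rfl fun C hC => by
            rw [← card_inter_moveCell_eq huv hB (mem_tabloidFinset.1 hC), inter_comm]
      _ = (D v + 1) * ((c * (D u * D u) : ℕ) : ℤ) -
            c * D u * ((D u * (D v + 1) : ℕ) : ℤ) := by
          rw [← hE, ← hR]
          push_cast
          rw [mul_sum, mul_sum, ← sum_sub_distrib]
          exact sum_congr rfl fun C _ => by ring
      _ = 0 := by push_cast; ring
  refine isTransitiveOn_tabAct_iff.2 ⟨c * D u / (D v + 1), Nat.div_pos ?_ (Nat.succ_pos _),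
    fun A hA B hB => ?_⟩
  · nlinarith
  · rw [← hconst A hA B hB, Nat.mul_div_cancel_left _ (Nat.succ_pos _)]

lemma isTransitiveOn_tabloids_moveBox {D : ℕ ⊕ ℕ → ℕ} {u v : ℕ ⊕ ℕ} (huv : u ≠ v)
    (hside : u.isLeft = v.isLeft) (hv : 0 < D v) (hvu : D v ≤ D u)
    (hY : IsTransitiveOn tabAct (tabloids G n D) Y) :
    IsTransitiveOn tabAct (tabloids G n (moveBox D v u)) Y := by
  refine isTransitiveOn_tabloids_of_moveBox huv hside ?_ (by rwa [moveBox_moveBox huv.symm hv])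
  rw [moveBox_apply huv.symm, moveBox_apply huv.symm, if_pos rfl, if_neg huv.symm, if_pos rfl]
  omega

lemma isTransitiveOn_tabloids_inl_of_msDom {σ τ : Multiset ℕ} (e : ℕ → ℕ) (h : msDom σ τ)
    (hsum : σ.sum = τ.sum)
    (hY : IsTransitiveOn tabAct (tabloids G n (Sum.elim (dparts σ) e)) Y) :
    IsTransitiveOn tabAct (tabloids G n (Sum.elim (dparts τ) e)) Y := by
  refine msDom_induction (P := fun d => IsTransitiveOn tabAct (tabloids G n (Sum.elim d e)) Y)
    (fun d i j hd hij hj hP => ?_) h hsum hY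
  rw [← moveBox_sumElim_inl]
  exact isTransitiveOn_tabloids_moveBox (by simp [hij.ne]) rfl hj (hd hij.le) hP

lemma isTransitiveOn_tabloids_inr_of_msDom {ρ π : Multiset ℕ} (d : ℕ → ℕ) (h : msDom ρ π)
    (hsum : ρ.sum = π.sum)
    (hY : IsTransitiveOn tabAct (tabloids G n (Sum.elim d (dparts ρ))) Y) :
    IsTransitiveOn tabAct (tabloids G n (Sum.elim d (dparts π))) Y := by
  refine msDom_induction (P := fun e => IsTransitiveOn tabAct (tabloids G n (Sum.elim d e)) Y)
    (fun e i j he hij hj hP => ?_) h hsum hY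
  rw [← moveBox_sumElim_inr]
  exact isTransitiveOn_tabloids_moveBox (by simp [hij.ne]) rfl hj (he hij.le) hP

end Transitivity

theorem dominance_rule_general (G : Type) [CommGroup G] [Fintype G]
    (n : ℕ) (σ ρ τ π : Multiset ℕ)
    (hn1 : σ.sum + ρ.sum = n) (hn2 : τ.sum + π.sum = n)
    (hsize : σ.sum = τ.sum) (h1 : msDom σ τ) (h2 : msDom ρ π) :
    DPDom G n σ ρ τ π := by
  intro Y hY
  rw [DPTransitive, setOf_isTabloid] at hY ⊢
  exact isTransitiveOn_tabloids_inr_of_msDom _ h2 (by omega)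
    (isTransitiveOn_tabloids_inl_of_msDom _ h1 hsize hY)

/-- **Dominance rule.**
Let `G` be a nontrivial finite abelian group and let `(σ,ρ)` and `(τ,π)` be double
partitions of `n ≥ 1` with `|σ| = |τ|`, `σ ⊴ τ` and `ρ ⊴ π`.
Then `(σ,ρ) ≽_G (τ,π)`, i.e. every `(σ,ρ)`-transitive subset of `G ≀ Sₙ`
is also `(τ,π)`-transitive. -/
theorem dominance_rule (G : Type) [CommGroup G] [Fintype G] [Nontrivial G]
    (n : ℕ) (hn : 1 ≤ n) (σ ρ τ π : Multiset ℕ)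
    (hσ0 : 0 ∉ σ) (hρ0 : 0 ∉ ρ) (hτ0 : 0 ∉ τ) (hπ0 : 0 ∉ π)
    (hn1 : σ.sum + ρ.sum = n) (hn2 : τ.sum + π.sum = n)
    (hsize : σ.sum = τ.sum) (h1 : msDom σ τ) (h2 : msDom ρ π) :
    DPDom G n σ ρ τ π :=
  dominance_rule_general G n σ ρ τ π hn1 hn2 hsize h1 h2
end

section
/- Let r ≥ 1 and n ≥ 1 be integers, let Y be a nonempty subset of C_r ≀ S_n, let d be the largest integer such that Y is a d-code, and let t be the largest integer such that Y is a t-design. Then r^t · n!/(n−t)! ≤ |Y| ≤ r^{n−d+1} · n!/(d−1)!. Moreover, equality holds in the lower bound if and only if it holds in the upper bound, and this happens if and only if d = n − t + 1. -/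
/-- `θ(w)`: the number of fixed points of `w` on `C_r × [n]`, divided by `r`. -/
noncomputable def theta {r n : ℕ} (w : Wr (Multiplicative (ZMod r)) n) : ℕ :=
  Nat.card {p : Multiplicative (ZMod r) × Fin n // wAct w p = p} / r

/-- The Charlier polynomial `C_k^{(a)}(x) = ∑_{j=0}^k (-1)^{k-j} binom(k,j) a^{-j} (x)_j`. -/
noncomputable def charlier (a : ℝ) (k : ℕ) (x : ℝ) : ℝ :=
  ∑ j ∈ Finset.range (k + 1),
    (-1 : ℝ) ^ (k - j) * (k.choose j : ℝ) * a⁻¹ ^ j * ∏ m ∈ Finset.range j, (x - m)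

/-- `Y` is a `t`-design in `C_r ≀ Sₙ`: it is transitive on `t`-tuples of elements of
`C_r × [n]` with pairwise distinct second coordinates. -/
def IsTDesign (r n t : ℕ) (Y : Set (Wr (Multiplicative (ZMod r)) n)) : Prop :=
  IsTransitiveOn (fun w v => fun s => wAct w (v s))
    {v : Fin t → Multiplicative (ZMod r) × Fin n | Function.Injective fun s => (v s).2} Y

/-- `Y` is a `d`-code in `C_r ≀ Sₙ` : `θ(x⁻¹y) ≤ n - d` for all distinct `x, y ∈ Y`. -/
def IsDCode (r n d : ℕ) (Y : Set (Wr (Multiplicative (ZMod r)) n)) : Prop :=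
  ∀ x ∈ Y, ∀ y ∈ Y, x ≠ y → (theta (x⁻¹ * y) : ℤ) ≤ (n : ℤ) - d

/-! For a tuple `a` of `k` points of `C_r × [n]` with distinct second coordinates, `y ↦ y • a`
maps `Y` into the set of such tuples, which has `r^k (n)_k` elements. For `k = t` the design
property says that all fibres of this map have the same positive size `c`, so
`|Y| = c r^t (n)_t`; for `k = n - d + 1` the code property says that two elements of `Y`
agreeing on `k` such points coincide, so the map is injective. Equality in a bound makes the
corresponding map a bijection, which turns a sharp `t`-design into an `(n - t + 1)`-code and an
extremal `d`-code into an `(n - d + 1)`-design. Since designs are closed downwards and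
`r^k (n)_k` is strictly increasing for `k < n`, maximality of `d` and `t` then forces
`d = n - t + 1`. -/

open Function Set

lemma card_eq_mul_card_of_card_fiber_eq {α β : Type*} [Finite α] [Finite β] (f : α → β)
    {c : ℕ} (h : ∀ b, Nat.card {x // f x = b} = c) : Nat.card α = c * Nat.card β := by
  have := Fintype.ofFinite β
  rw [← Nat.card_congr (Equiv.sigmaFiberEquiv f), Nat.card_sigma]
  simp [h, mul_comm]

section Transitive

variable {W Ω : Type*} {act : W → Ω → Ω} {S : Set Ω} {Y : Set W} {a : Ω}

lemma card_eq_mul_card_of_card_transporter_eq [Finite W] [Finite Ω]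
    (hS : ∀ y, MapsTo (act y) S S) (ha : a ∈ S) {c : ℕ}
    (hc : ∀ b ∈ S, Nat.card {y // y ∈ Y ∧ act y a = b} = c) :
    Nat.card Y = c * Nat.card S :=
  card_eq_mul_card_of_card_fiber_eq (fun y : Y => (⟨act y a, hS y ha⟩ : S)) fun b => by
    rw [← hc b b.2, ← Nat.card_congr (Equiv.subtypeSubtypeEquivSubtypeInter (· ∈ Y) _)]
    exact Nat.card_congr (Equiv.subtypeEquivRight fun y => Subtype.ext_iff)

lemma injOn_of_card_eq_one (hS : ∀ y, MapsTo (act y) S S) (ha : a ∈ S)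
    (h : ∀ b ∈ S, Nat.card {y // y ∈ Y ∧ act y a = b} = 1) : InjOn (act · a) Y := by
  intro x hx y hy hxy
  have := (Nat.card_eq_one_iff_unique.1 (h _ (hS x ha))).1
  have hx' : (⟨x, hx, rfl⟩ : {y // y ∈ Y ∧ act y a = act x a}) = ⟨y, hy, hxy.symm⟩ :=
    Subsingleton.elim _ _
  exact congrArg Subtype.val hx'

lemma card_le_card_of_injOn [Finite Ω] (hS : ∀ y, MapsTo (act y) S S) (ha : a ∈ S)
    (hinj : InjOn (act · a) Y) : Nat.card Y ≤ Nat.card S :=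
  Nat.card_le_card_of_injective (fun y : Y => (⟨act y a, hS y ha⟩ : S))
    fun x y h => Subtype.ext (hinj x.2 y.2 (congrArg Subtype.val h))

lemma card_eq_one_of_injOn_of_card_eq [Finite Ω] (hS : ∀ y, MapsTo (act y) S S) (ha : a ∈ S)
    (hinj : InjOn (act · a) Y) (hcard : Nat.card Y = Nat.card S) {b : Ω} (hb : b ∈ S) :
    Nat.card {y // y ∈ Y ∧ act y a = b} = 1 := by
  let f : Y → S := fun y => ⟨act y a, hS y ha⟩
  have hf : Bijective f := by
    rw [Nat.bijective_iff_injective_and_card]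
    exact ⟨fun x y h => Subtype.ext (hinj x.2 y.2 (congrArg Subtype.val h)), hcard⟩
  rw [← Nat.card_congr (Equiv.subtypeSubtypeEquivSubtypeInter (· ∈ Y) (act · a = b)),
    Nat.card_eq_one_iff_unique]
  obtain ⟨y, hy⟩ := hf.2 ⟨b, hb⟩
  exact ⟨⟨fun x y => Subtype.ext (hf.1 (Subtype.ext (x.2.trans y.2.symm)))⟩,
    ⟨y, congrArg Subtype.val hy⟩⟩

lemma IsTransitiveOn.of_equivariant [Finite W] {Ω' : Type*} {act' : W → Ω' → Ω'}
    {S' : Set Ω'} (p : Ω' → Ω) (hp : ∀ y v, p (act' y v) = act y (p v))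
    (hS' : ∀ y, MapsTo (act' y) S' S') {m : ℕ} (hm : 0 < m)
    (hfib : ∀ b ∈ S, Nat.card {v // v ∈ S' ∧ p v = b} = m)
    (h : IsTransitiveOn act' S' Y) : IsTransitiveOn act S Y := by
  obtain ⟨c, hc, hcc⟩ := h
  refine ⟨c * m, by positivity, fun a ha b hb => ?_⟩
  obtain ⟨⟨a', ha', rfl⟩⟩ : Nonempty {v // v ∈ S' ∧ p v = a} :=
    (Nat.card_pos_iff.1 (hfib a ha ▸ hm)).1
  have : Finite {v // v ∈ S' ∧ p v = b} := (Nat.card_pos_iff.1 (hfib b hb ▸ hm)).2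
  rw [← hfib b hb]
  refine card_eq_mul_card_of_card_fiber_eq (fun y : {y // y ∈ Y ∧ act y (p a') = b} =>
    (⟨act' y a', hS' y ha', by rw [hp, y.2.2]⟩ : {v // v ∈ S' ∧ p v = b})) fun b' => ?_
  rw [← hcc a' ha' b' b'.2.1]
  refine Nat.card_congr ((Equiv.subtypeEquivRight fun y => ?_).trans
    (Equiv.subtypeSubtypeEquivSubtype fun {y} hy => ⟨hy.1, by rw [← hp, hy.2, b'.2.2]⟩))
  simp [Subtype.ext_iff, y.2.1]

end Transitive

section Tuples

variable {G : Type*} {n : ℕ}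

variable (G n) in
def injTuples (k : ℕ) : Set (Fin k → G × Fin n) :=
  {v | Injective fun s => (v s).2}

lemma snoc_mem_injTuples_iff {k : ℕ} {b : Fin k → G × Fin n} {q : G × Fin n} :
    Fin.snoc b q ∈ injTuples G n (k + 1) ↔
      b ∈ injTuples G n k ∧ q.2 ∉ range fun s => (b s).2 := by
  show Injective (Prod.snd ∘ Fin.snoc b q) ↔ Injective (Prod.snd ∘ b) ∧ _
  rw [Fin.comp_snoc, Fin.snoc_injective_iff]
  rfl

lemma injTuples_nonempty [One G] {k : ℕ} (hk : k ≤ n) : (injTuples G n k).Nonempty :=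
  ⟨fun s => (1, Fin.castLE hk s), fun _ _ h => Fin.castLE_injective hk h⟩

lemma injTuples_eq_empty {k : ℕ} (hk : n < k) : injTuples G n k = ∅ :=
  eq_empty_iff_forall_notMem.2 fun _ hv =>
    hk.not_ge (by simpa using Fintype.card_le_of_injective _ hv)

lemma card_injTuples [Finite G] (k : ℕ) :
    Nat.card (injTuples G n k) = Nat.card G ^ k * n.descFactorial k := by
  have e : injTuples G n k ≃ (Fin k → G) × (Fin k ↪ Fin n) :=
    { toFun := fun v => (fun s => (v.1 s).1, ⟨fun s => (v.1 s).2, v.2⟩)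
      invFun := fun q => ⟨fun s => (q.1 s, q.2 s), q.2.injective⟩
      left_inv := fun _ => rfl
      right_inv := fun _ => rfl }
  have := Fintype.ofFinite G
  rw [Nat.card_congr e, Nat.card_prod, Nat.card_fun,
    Nat.card_eq_fintype_card (α := Fin k ↪ Fin n), Fintype.card_embedding_eq]
  simp

lemma card_injTuples_init_fiber [Finite G] {k : ℕ} {b : Fin k → G × Fin n}
    (hb : b ∈ injTuples G n k) :
    Nat.card {v // v ∈ injTuples G n (k + 1) ∧ Fin.init v = b} = Nat.card G * (n - k) := by
  have e : {v // v ∈ injTuples G n (k + 1) ∧ Fin.init v = b} ≃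
      G × {i : Fin n // i ∉ range fun s => (b s).2} :=
    { toFun := fun v => ((v.1 (Fin.last k)).1, ⟨(v.1 (Fin.last k)).2, by
        have := v.2.1
        rw [← Fin.snoc_init_self v.1, v.2.2] at this
        exact (snoc_mem_injTuples_iff.1 this).2⟩)
      invFun := fun q => ⟨Fin.snoc b (q.1, q.2.1), snoc_mem_injTuples_iff.2 ⟨hb, q.2.2⟩,
        Fin.init_snoc _ _⟩
      left_inv := fun v => by
        ext1
        conv_rhs => rw [← Fin.snoc_init_self v.1, v.2.2]
      right_inv := fun q => by simp }
  have := Fintype.ofFinite G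
  rw [Nat.card_congr e, Nat.card_prod, Nat.card_eq_fintype_card (α := {i // _}),
    Fintype.card_subtype_compl, Fintype.card_fin,
    ← Nat.card_eq_fintype_card, Nat.card_range_of_injective hb, Nat.card_fin]

end Tuples

section Wreath

variable {G : Type*} [CommGroup G] {n : ℕ}

instance [Finite G] : Finite (Wr G n) := Finite.of_equiv _ SemidirectProduct.equivProd.symm

lemma wAct_one (p : G × Fin n) : wAct 1 p = p := by
  simp [wAct]

lemma wAct_mul (u v : Wr G n) (p : G × Fin n) : wAct (u * v) p = wAct u (wAct v p) := by
  simp [wAct, permMulAut, mul_assoc, mul_comm (v.left _)]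

lemma wAct_eq_wAct_iff {x y : Wr G n} {p : G × Fin n} :
    wAct x p = wAct y p ↔ wAct (x⁻¹ * y) p = p := by
  rw [wAct_mul]
  constructor
  · intro h; rw [← h, ← wAct_mul, inv_mul_cancel, wAct_one]
  · intro h; rw [← congrArg (wAct x) h, ← wAct_mul, mul_inv_cancel, wAct_one]

lemma wAct_eq_self_iff {w : Wr G n} {p : G × Fin n} :
    wAct w p = p ↔ w.right p.2 = p.2 ∧ w.left p.2 = 1 := by
  simp only [wAct, Prod.ext_iff]
  constructor
  · rintro ⟨h1, h2⟩
    rw [h2] at h1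
    exact ⟨h2, by simpa using h1⟩
  · rintro ⟨h2, h1⟩
    simp [h2, h1]

def tupleAct {k : ℕ} (w : Wr G n) (v : Fin k → G × Fin n) : Fin k → G × Fin n :=
  fun s => wAct w (v s)

lemma mapsTo_tupleAct (w : Wr G n) (k : ℕ) :
    MapsTo (tupleAct w) (injTuples G n k) (injTuples G n k) :=
  fun _ hv _ _ h => hv (w.right.injective h)

lemma IsTransitiveOn.injTuples_of_succ [Finite G] {Y : Set (Wr G n)} {k : ℕ} (hk : k < n)
    (h : IsTransitiveOn tupleAct (injTuples G n (k + 1)) Y) :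
    IsTransitiveOn tupleAct (injTuples G n k) Y :=
  h.of_equivariant Fin.init (fun _ _ => rfl) (mapsTo_tupleAct · _)
    (Nat.mul_pos Nat.card_pos (Nat.sub_pos_of_lt hk)) fun _ => card_injTuples_init_fiber

lemma card_eq_mul_of_forall_card_tupleAct_eq [Finite G] {Y : Set (Wr G n)} {k c : ℕ}
    (hk : k ≤ n)
    (h : ∀ a ∈ injTuples G n k, ∀ b ∈ injTuples G n k,
      Nat.card {y // y ∈ Y ∧ tupleAct y a = b} = c) :
    Nat.card Y = c * (Nat.card G ^ k * n.descFactorial k) := by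
  obtain ⟨a, ha⟩ := injTuples_nonempty (G := G) hk
  rw [card_eq_mul_card_of_card_transporter_eq (mapsTo_tupleAct · k) ha (h a ha), card_injTuples]

def fixedCoords (w : Wr G n) : Set (Fin n) := {i | w.right i = i ∧ w.left i = 1}

lemma card_fixedPoints_wAct (w : Wr G n) :
    Nat.card {p // wAct w p = p} = Nat.card G * Nat.card (fixedCoords w) := by
  rw [← Nat.card_prod]
  exact Nat.card_congr
    { toFun := fun p => (p.1.1, ⟨p.1.2, wAct_eq_self_iff.1 p.2⟩)
      invFun := fun q => ⟨(q.1, q.2.1), wAct_eq_self_iff.2 q.2.2⟩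
      left_inv := fun _ => rfl
      right_inv := fun _ => rfl }

lemma exists_injTuple_fixed_iff {w : Wr G n} {k : ℕ} :
    (∃ a ∈ injTuples G n k, tupleAct w a = a) ↔ k ≤ Nat.card (fixedCoords w) := by
  constructor
  · rintro ⟨a, ha, hfix⟩
    simpa using Nat.card_le_card_of_injective
      (fun s => (⟨(a s).2, wAct_eq_self_iff.1 (congrFun hfix s)⟩ : fixedCoords w))
      fun s t h => ha (congrArg Subtype.val h)
  · intro hk
    obtain ⟨e⟩ : Nonempty (Fin k ↪ fixedCoords w) := by
      have := Fintype.ofFinite (fixedCoords w)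
      exact Function.Embedding.nonempty_of_card_le (by simpa [Nat.card_eq_fintype_card] using hk)
    exact ⟨fun s => (1, e s), fun s t h => e.injective (Subtype.ext h),
      funext fun s => wAct_eq_self_iff.2 (e s).2⟩

lemma card_fixedCoords_lt {w : Wr G n} (hw : w ≠ 1) : Nat.card (fixedCoords w) < n := by
  have hne : fixedCoords w ≠ univ := fun h => hw <| by
    have hfix (i : Fin n) : i ∈ fixedCoords w := h ▸ mem_univ i
    exact SemidirectProduct.ext (funext fun i => (hfix i).2) (Equiv.ext fun i => (hfix i).1)
  simpa [Nat.card_coe_set_eq] using Set.ncard_lt_card hne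

end Wreath

lemma pow_mul_descFactorial_lt {q n a b : ℕ} (hq : 1 ≤ q) (hab : a < b) (hbn : b < n) :
    q ^ a * n.descFactorial a < q ^ b * n.descFactorial b := by
  have step (k : ℕ) : q ^ (k + 1) * n.descFactorial (k + 1) =
      q ^ k * n.descFactorial k * (q * (n - k)) := by
    rw [pow_succ, Nat.descFactorial_succ]; ring
  induction b, hab using Nat.le_induction with
  | base =>
    rw [step]
    refine lt_mul_of_one_lt_right (Nat.mul_pos (pow_pos hq a) (Nat.descFactorial_pos.2 ?_)) ?_
    · omega
    · have := Nat.mul_le_mul hq (show 2 ≤ n - a by omega); omega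
  | succ b hab ih =>
    rw [step]
    refine (ih (by omega)).trans_le (le_mul_of_one_le_right (Nat.zero_le _) ?_)
    have := Nat.mul_le_mul hq (show 1 ≤ n - b by omega); omega

section CyclicWreath

variable {r n : ℕ} {Y : Set (Wr (Multiplicative (ZMod r)) n)}

lemma card_multiplicative_zmod [NeZero r] : Nat.card (Multiplicative (ZMod r)) = r := by
  simp [Nat.card_eq_fintype_card]

lemma theta_eq_card_fixedCoords [NeZero r] (w : Wr (Multiplicative (ZMod r)) n) :
    theta w = Nat.card (fixedCoords w) := by
  rw [theta, card_fixedPoints_wAct, card_multiplicative_zmod,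
    Nat.mul_div_cancel_left _ (NeZero.pos r)]

lemma isTDesign_of_lt {t : ℕ} (h : n < t) (Y : Set (Wr (Multiplicative (ZMod r)) n)) :
    IsTDesign r n t Y :=
  ⟨1, one_pos, fun _ ha => ((injTuples_eq_empty h).subset ha).elim⟩

lemma IsTDesign.of_le [NeZero r] {m t : ℕ} (h : IsTDesign r n m Y) (htm : t ≤ m)
    (hm : m ≤ n) :
    IsTDesign r n t Y := by
  induction m with
  | zero => rwa [Nat.le_zero.1 htm]
  | succ m ih =>
    rcases htm.eq_or_lt with rfl | hlt
    · exact h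
    · exact ih (IsTransitiveOn.injTuples_of_succ hm h) (by omega) (by omega)

lemma IsDCode.anti {d d' : ℕ} (h : IsDCode r n d Y) (hd : d' ≤ d) : IsDCode r n d' Y :=
  fun x hx y hy hxy => (h x hx y hy hxy).trans (by omega)

lemma IsDCode.one_le_and_le_of_not_succ [NeZero r] {d : ℕ} (hd : IsDCode r n d Y)
    (hd' : ¬ IsDCode r n (d + 1) Y) : 1 ≤ d ∧ d ≤ n := by
  unfold IsDCode at hd'
  push Not at hd'
  obtain ⟨x, hx, y, hy, hxy, hθ⟩ := hd'
  have hθn := card_fixedCoords_lt (inv_mul_eq_one.not.2 hxy)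
  have hθd := hd x hx y hy hxy
  rw [theta_eq_card_fixedCoords] at hθ hθd
  omega

lemma IsDCode.injOn_tupleAct [NeZero r] {d : ℕ} (hd : IsDCode r n d Y)
    {a : Fin (n - d + 1) → Multiplicative (ZMod r) × Fin n}
    (ha : a ∈ injTuples _ n (n - d + 1)) : InjOn (tupleAct · a) Y := by
  intro x hx y hy hxy
  by_contra hne
  have hfix : tupleAct (x⁻¹ * y) a = a := funext fun s => wAct_eq_wAct_iff.1 (congrFun hxy s)
  have hle := exists_injTuple_fixed_iff.1 ⟨a, ha, hfix⟩
  have hcode := hd x hx y hy hne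
  rw [theta_eq_card_fixedCoords] at hcode
  omega

lemma isDCode_of_injOn_tupleAct [NeZero r] {k : ℕ} (hk : k ≤ n)
    (h : ∀ a ∈ injTuples _ n k, InjOn (tupleAct · a) Y) : IsDCode r n (n - k + 1) Y := by
  intro x hx y hy hne
  rw [theta_eq_card_fixedCoords]
  by_contra hlt
  obtain ⟨a, ha, hfix⟩ :=
    exists_injTuple_fixed_iff.2 (show k ≤ Nat.card (fixedCoords (x⁻¹ * y)) by omega)
  exact hne (h a ha hx hy (funext fun s => wAct_eq_wAct_iff.2 (congrFun hfix s)))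

lemma IsDCode.card_le [NeZero r] {d : ℕ} (hd : IsDCode r n d Y) (hd1 : 1 ≤ d) (hdn : d ≤ n) :
    Nat.card Y ≤ r ^ (n - d + 1) * n.descFactorial (n - d + 1) := by
  obtain ⟨a, ha⟩ :=
    injTuples_nonempty (G := Multiplicative (ZMod r)) (show n - d + 1 ≤ n by omega)
  have := card_le_card_of_injOn (mapsTo_tupleAct · _) ha (hd.injOn_tupleAct ha)
  rwa [card_injTuples, card_multiplicative_zmod] at this

lemma IsDCode.isTDesign_of_card_eq [NeZero r] {d : ℕ} (hd : IsDCode r n d Y)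
    (h : Nat.card Y = r ^ (n - d + 1) * n.descFactorial (n - d + 1)) :
    IsTDesign r n (n - d + 1) Y :=
  ⟨1, one_pos, fun _ ha _ hb => card_eq_one_of_injOn_of_card_eq (mapsTo_tupleAct · _) ha
    (hd.injOn_tupleAct ha) (by rw [h, card_injTuples, card_multiplicative_zmod]) hb⟩

end CyclicWreath

theorem code_design_bounds_general (r n : ℕ) (hr : 1 ≤ r)
    (Y : Set (Wr (Multiplicative (ZMod r)) n))
    (d t : ℕ)
    (hd : IsDCode r n d Y) (hd' : ¬ IsDCode r n (d + 1) Y)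
    (ht : IsTDesign r n t Y) (ht' : ¬ IsTDesign r n (t + 1) Y) :
    (r ^ t * n.descFactorial t ≤ Nat.card Y ∧
      Nat.card Y ≤ r ^ (n - d + 1) * n.descFactorial (n - d + 1)) ∧
    (r ^ t * n.descFactorial t = Nat.card Y ↔
      Nat.card Y = r ^ (n - d + 1) * n.descFactorial (n - d + 1)) ∧
    (r ^ t * n.descFactorial t = Nat.card Y ↔ d = n - t + 1) := by
  have : NeZero r := ⟨by omega⟩
  have htn : t + 1 ≤ n := not_lt.1 fun h => ht' (isTDesign_of_lt h Y)
  obtain ⟨hd1, hdn⟩ := hd.one_le_and_le_of_not_succ hd'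
  obtain ⟨c, hc, hcc⟩ := ht
  have hcard : Nat.card Y = c * (r ^ t * n.descFactorial t) :=
    (card_eq_mul_of_forall_card_tupleAct_eq (by omega) hcc).trans (by rw [card_multiplicative_zmod])
  have hL : r ^ t * n.descFactorial t ≠ 0 :=
    (Nat.mul_pos (pow_pos hr t) (Nat.descFactorial_pos.2 (by omega))).ne'
  have lower : r ^ t * n.descFactorial t ≤ Nat.card Y := hcard ▸ Nat.le_mul_of_pos_left _ hc
  have upper := hd.card_le hd1 hdn
  have hdt : d ≤ n - t + 1 := by
    by_contra h
    exact (lower.trans upper).not_gt (pow_mul_descFactorial_lt hr (by omega) (by omega))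
  have lower_eq (h : r ^ t * n.descFactorial t = Nat.card Y) : d = n - t + 1 := by
    obtain rfl : c = 1 := (mul_eq_right₀ hL).1 (hcard ▸ h).symm
    by_contra hne
    exact hd' ((isDCode_of_injOn_tupleAct (by omega) fun a ha =>
      injOn_of_card_eq_one (mapsTo_tupleAct · t) ha (hcc a ha)).anti (by omega))
  have upper_eq (h : Nat.card Y = r ^ (n - d + 1) * n.descFactorial (n - d + 1)) :
      d = n - t + 1 := by
    by_contra hne
    exact ht' ((hd.isTDesign_of_card_eq h).of_le (by omega) (by omega))
  have tight (h : d = n - t + 1) : r ^ t * n.descFactorial t = Nat.card Y ∧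
      Nat.card Y = r ^ (n - d + 1) * n.descFactorial (n - d + 1) := by
    obtain rfl : n - d + 1 = t := by omega
    exact ⟨le_antisymm lower upper, (le_antisymm lower upper).symm⟩
  exact ⟨⟨lower, upper⟩,
    ⟨fun h => (tight (lower_eq h)).2, fun h => (tight (upper_eq h)).1⟩,
    lower_eq, fun h => (tight h).1⟩

/-- **Bounds relating codes and designs in `C_r ≀ Sₙ`.**
Let `r, n ≥ 1`, let `Y` be a nonempty subset of `C_r ≀ Sₙ`, let `d` be the largest
integer such that `Y` is a `d`-code and `t` the largest integer such that `Y` is a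
`t`-design.  Then `r^t·(n)_t ≤ |Y| ≤ r^{n-d+1}·(n)_{n-d+1}` (where `(n)_j = n!/(n-j)!`
is the falling factorial, so `n!/(d-1)! = (n)_{n-d+1}`).  Equality holds in the lower
bound iff it holds in the upper bound, and this happens iff `d = n - t + 1`. -/
theorem code_design_bounds (r n : ℕ) (hr : 1 ≤ r) (hn : 1 ≤ n)
    (Y : Set (Wr (Multiplicative (ZMod r)) n)) (hY : Y.Nonempty)
    (d t : ℕ)
    (hd : IsDCode r n d Y) (hd' : ¬ IsDCode r n (d + 1) Y)
    (ht : IsTDesign r n t Y) (ht' : ¬ IsTDesign r n (t + 1) Y) :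
    (r ^ t * n.descFactorial t ≤ Nat.card Y ∧
      Nat.card Y ≤ r ^ (n - d + 1) * n.descFactorial (n - d + 1)) ∧
    (r ^ t * n.descFactorial t = Nat.card Y ↔
      Nat.card Y = r ^ (n - d + 1) * n.descFactorial (n - d + 1)) ∧
    (r ^ t * n.descFactorial t = Nat.card Y ↔ d = n - t + 1) :=
  code_design_bounds_general r n hr Y d t hd hd' ht ht'
end
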